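/- arXiv:2108.05785 — 3 statements merged into one kernel-verified Lean document; each statement's English description precedes it below -/
import Mathlib

section
/- For every real p ≠ 0 and every s > 2, there exist a dimension n and n×n complex matrices K₁, K₂ such that the functional Ψ(A) := Tr |K₁ A^p K₂|^s is not concave on the set of positive definite n×n complex matrices; i.e., there exist positive definite A₁, A₂ and λ ∈ [0,1] with Ψ(λA₁+(1−λ)A₂) < λΨ(A₁) + (1−λ)Ψ(A₂). -/
open Matrix
open scoped ComplexOrder

/-- Real power of a Hermitian matrix, defined via the spectral decomposition
(and `0` for non-Hermitian matrices). -/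
noncomputable def mpow {n : Type*} [Fintype n] [DecidableEq n]
    (M : Matrix n n ℂ) (t : ℝ) : Matrix n n ℂ :=
  if h : M.IsHermitian then
    (h.eigenvectorUnitary : Matrix n n ℂ) *
      Matrix.diagonal (fun i => ((h.eigenvalues i ^ t : ℝ) : ℂ)) *
      (star (h.eigenvectorUnitary : Matrix n n ℂ))
  else 0

/-- `Tr |X|^s := Tr ((X^* X)^{s/2})`. -/
noncomputable def trPow {n : Type*} [Fintype n] [DecidableEq n]
    (X : Matrix n n ℂ) (s : ℝ) : ℝ :=
  (mpow (Xᴴ * X) (s / 2)).trace.re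

/-!
Take `K₁ = [[1, -1], [0, 0]]` and `K₂ = [[1, 0], [1, 0]]`. For a diagonal matrix `D`,
`K₁ D K₂ = (D₀₀ - D₁₁) E₀₀`, so `Ψ(A) = Tr |K₁ A^p K₂|^s` vanishes at scalar matrices and is
strictly positive at a positive diagonal matrix whose entries have distinct `p`-th powers.
The midpoint of `diag(1, 4)` and `diag(4, 1)` is `(5/2) I`, hence `Ψ` at the midpoint is `0`,
below the average of the two positive values at the endpoints.
-/

section Diagonal

variable {n : Type*} [DecidableEq n]

lemma smul_diagonal_ofReal_add_smul (l : ℝ) (a b : n → ℝ) :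
    (l : ℂ) • diagonal (fun i => (a i : ℂ)) + ((1 - l : ℝ) : ℂ) • diagonal (fun i => (b i : ℂ)) =
      diagonal fun i => ((l * a i + (1 - l) * b i : ℝ) : ℂ) := by
  rw [← diagonal_smul, ← diagonal_smul, diagonal_add]
  congr 1
  ext i
  simp

lemma posDef_diagonal_ofReal {d : n → ℝ} (hd : ∀ i, 0 < d i) :
    (diagonal fun i => (d i : ℂ)).PosDef :=
  posDef_diagonal_iff.mpr fun i => by exact_mod_cast hd i

variable [Fintype n]

lemma mpow_eq_cfc {M : Matrix n n ℂ} (hM : M.IsHermitian) (t : ℝ) :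
    mpow M t = cfc (· ^ t : ℝ → ℝ) M := by
  rw [hM.cfc_eq, mpow, dif_pos hM]
  rfl

open Polynomial in
lemma cfc_diagonal_ofReal (f : ℝ → ℝ) (d : n → ℝ) :
    cfc f (diagonal fun i => (d i : ℂ)) = diagonal fun i => (f (d i) : ℂ) := by
  -- on the finite spectrum `range d`, `f` agrees with its Lagrange interpolant
  set q := Lagrange.interpolate (Finset.univ.image d) id f
  have hq : ∀ i, q.eval (d i) = f (d i) := fun i =>
    Lagrange.eval_interpolate_at_node _ (Set.injOn_id _)
      (Finset.mem_image_of_mem d (Finset.mem_univ i))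
  have hspec : spectrum ℝ (diagonal fun i => (d i : ℂ)) = Set.range d := by
    ext x
    simp [← spectrum.algebraMap_mem_iff ℂ]
  have hherm : (diagonal fun i => (d i : ℂ)).IsHermitian := by
    simp [IsHermitian, diagonal_conjTranspose, Pi.star_def]
  have hdiag : (diagonal fun i => (d i : ℂ)) = diagonalAlgHom ℝ fun i => algebraMap ℝ ℂ (d i) :=
    rfl
  rw [cfc_congr (g := q.eval) (by rw [hspec]; rintro - ⟨i, rfl⟩; exact (hq i).symm),
    cfc_polynomial q _ hherm.isSelfAdjoint]
  simp only [hdiag, aeval_algHom_apply, aeval_pi_apply, aeval_algebraMap_apply,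
    coe_aeval_eq_eval, hq]
  rfl

lemma mpow_diagonal_ofReal (d : n → ℝ) (t : ℝ) :
    mpow (diagonal fun i => (d i : ℂ)) t = diagonal fun i => ((d i ^ t : ℝ) : ℂ) := by
  have hherm : (diagonal fun i => (d i : ℂ)).IsHermitian := by
    simp [IsHermitian, diagonal_conjTranspose, Pi.star_def]
  rw [mpow_eq_cfc hherm, cfc_diagonal_ofReal]

end Diagonal

section TracePower

variable {n : Type*} [Fintype n] [DecidableEq n]

lemma trace_mpow {M : Matrix n n ℂ} (hM : M.IsHermitian) (t : ℝ) :
    (mpow M t).trace = ∑ i, ((hM.eigenvalues i ^ t : ℝ) : ℂ) := by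
  have hU : star (hM.eigenvectorUnitary : Matrix n n ℂ) * hM.eigenvectorUnitary = 1 :=
    Unitary.star_mul_self_of_mem hM.eigenvectorUnitary.2
  rw [mpow, dif_pos hM, trace_mul_cycle, hU, one_mul, trace_diagonal]

lemma trPow_eq_sum (X : Matrix n n ℂ) (s : ℝ) :
    trPow X s =
      ∑ i, (posSemidef_conjTranspose_mul_self X).isHermitian.eigenvalues i ^ (s / 2) := by
  rw [trPow, trace_mpow (posSemidef_conjTranspose_mul_self X).isHermitian, Complex.re_sum]
  simp only [Complex.ofReal_re]

lemma trPow_zero {s : ℝ} (hs : s ≠ 0) : trPow (0 : Matrix n n ℂ) s = 0 := by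
  have h0 := (posSemidef_conjTranspose_mul_self (0 : Matrix n n ℂ)).isHermitian
    |>.eigenvalues_eq_zero_iff.mpr (by simp)
  rw [trPow_eq_sum, h0]
  simp [Real.zero_rpow (div_ne_zero hs two_ne_zero)]

lemma trPow_pos {X : Matrix n n ℂ} (hX : X ≠ 0) (s : ℝ) : 0 < trPow X s := by
  have hpsd := posSemidef_conjTranspose_mul_self X
  obtain ⟨i, hi⟩ : ∃ i, hpsd.isHermitian.eigenvalues i ≠ 0 := by
    by_contra! h
    exact hX (conjTranspose_mul_self_eq_zero.mp
      (hpsd.isHermitian.eigenvalues_eq_zero_iff.mp (funext h)))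
  rw [trPow_eq_sum]
  exact Finset.sum_pos' (fun j _ => Real.rpow_nonneg (hpsd.eigenvalues_nonneg j) _)
    ⟨i, Finset.mem_univ i, Real.rpow_pos_of_pos ((hpsd.eigenvalues_nonneg i).lt_of_ne' hi) _⟩

end TracePower

lemma sandwich_diagonal (v : Fin 2 → ℂ) :
    !![1, -1; 0, 0] * diagonal v * !![1, 0; 1, 0] = !![v 0 - v 1, 0; 0, 0] := by
  ext i j
  fin_cases i <;> fin_cases j <;>
    simp [mul_apply, vecMul, dotProduct, Fin.sum_univ_two, sub_eq_add_neg]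

lemma sandwich_mpow_diagonal_eq_zero_iff (d : Fin 2 → ℝ) (p : ℝ) :
    !![1, -1; 0, 0] * mpow (diagonal fun i => (d i : ℂ)) p * !![1, 0; 1, 0] = 0 ↔
      d 0 ^ p = d 1 ^ p := by
  rw [mpow_diagonal_ofReal, sandwich_diagonal, ← Matrix.ext_iff]
  simp [Fin.forall_fin_two, sub_eq_zero]

theorem not_concave_trace_functional (p : ℝ) (hp : p ≠ 0) (s : ℝ) (hs : 2 < s) :
    ∃ (m : ℕ) (K₁ K₂ A₁ A₂ : Matrix (Fin m) (Fin m) ℂ) (l : ℝ),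
      A₁.PosDef ∧ A₂.PosDef ∧ l ∈ Set.Icc (0 : ℝ) 1 ∧
      trPow (K₁ * mpow ((l : ℂ) • A₁ + ((1 - l : ℝ) : ℂ) • A₂) p * K₂) s
        < l * trPow (K₁ * mpow A₁ p * K₂) s
          + (1 - l) * trPow (K₁ * mpow A₂ p * K₂) s := by
  refine ⟨2, !![1, -1; 0, 0], !![1, 0; 1, 0], diagonal fun i => ((![1, 4] i : ℝ) : ℂ),
    diagonal fun i => ((![4, 1] i : ℝ) : ℂ), 1 / 2,
    posDef_diagonal_ofReal fun i => by fin_cases i <;> norm_num,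
    posDef_diagonal_ofReal fun i => by fin_cases i <;> norm_num, by norm_num, ?_⟩
  have h4p : (1 : ℝ) ^ p ≠ 4 ^ p := by
    simpa [eq_comm] using (Real.rpow_right_inj (by norm_num : (0 : ℝ) < 4) (by norm_num)).not.mpr hp
  have h₁ := trPow_pos ((sandwich_mpow_diagonal_eq_zero_iff ![1, 4] p).not.mpr h4p) s
  have h₂ := trPow_pos ((sandwich_mpow_diagonal_eq_zero_iff ![4, 1] p).not.mpr h4p.symm) s
  rw [smul_diagonal_ofReal_add_smul, (sandwich_mpow_diagonal_eq_zero_iff _ p).mpr (by norm_num),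
    trPow_zero (zero_lt_two.trans hs).ne']
  linarith
end

section
/- The function h : (0,∞) → (0,∞) defined by h(x) := (x−1)/log x for x ≠ 1 and h(1) := 1 is operator monotone: for all n and all positive definite n×n complex matrices A, B with A ≤ B in the Loewner order, one has h(A) ≤ h(B), where h is applied via the spectral decomposition. (This follows from the representation h(x) = ∫₀¹ x^t dt.) -/
open Matrix
open scoped ComplexOrder

/-- Applying a real function to a Hermitian matrix via the spectral decomposition
(and `0` for non-Hermitian matrices). -/
noncomputable def applyFun {n : Type*} [Fintype n] [DecidableEq n]
    (f : ℝ → ℝ) (M : Matrix n n ℂ) : Matrix n n ℂ :=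
  if h : M.IsHermitian then
    (h.eigenvectorUnitary : Matrix n n ℂ) *
      Matrix.diagonal (fun i => ((f (h.eigenvalues i) : ℝ) : ℂ)) *
      (star (h.eigenvectorUnitary : Matrix n n ℂ))
  else 0

/-- `h(x) = (x - 1)/log x` for `x ≠ 1`, `h(1) = 1`. -/
noncomputable def hfun (x : ℝ) : ℝ :=
  if x = 1 then 1 else (x - 1) / Real.log x

/-!
For `x > 0` one has `h x = ∫ t in 0..1, x ^ t`. The continuous functional calculus commutes with
this integral, so `h a = ∫ t in 0..1, a ^ t` for a strictly positive element `a` of a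
C⋆-algebra, and integrating the Löwner–Heinz inequalities `a ^ t ≤ b ^ t` (`0 ≤ t ≤ 1`) gives
`h a ≤ h b` whenever `a ≤ b`.
-/

open MeasureTheory Set Function

lemma Real.rpow_le_one_add {x t : ℝ} (hx : 0 ≤ x) (ht : t ∈ Icc 0 1) : x ^ t ≤ 1 + x := by
  rcases le_total x 1 with hx1 | hx1
  · linarith [Real.rpow_le_one hx hx1 ht.1]
  · linarith [Real.rpow_le_self_of_one_le hx1 ht.2]

lemma hfun_eq_integral_rpow {x : ℝ} (hx : 0 < x) : hfun x = ∫ t in (0 : ℝ)..1, x ^ t := by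
  rcases eq_or_ne x 1 with rfl | hx1
  · simp [hfun]
  have hlog : Real.log x ≠ 0 := Real.log_ne_zero_of_pos_of_ne_one hx hx1
  have hderiv (t : ℝ) : HasDerivAt (fun s => x ^ s / Real.log x) (x ^ t) t := by
    simpa [hlog] using ((Real.hasStrictDerivAt_const_rpow hx t).hasDerivAt.div_const (Real.log x))
  rw [intervalIntegral.integral_eq_sub_of_hasDerivAt (fun t _ => hderiv t)
    ((Real.continuous_const_rpow hx.ne').intervalIntegrable _ _), hfun, if_neg hx1]
  simp [sub_div]

namespace CFC

variable {A : Type*} [CStarAlgebra A] [PartialOrder A] [StarOrderedRing A] {a : A}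

lemma continuousOn_uncurry_rpow (ha : IsStrictlyPositive a) (s : Set ℝ) :
    ContinuousOn (uncurry fun t x : ℝ => x ^ t) (s ×ˢ spectrum ℝ a) := by
  rintro ⟨t, x⟩ ⟨-, hx⟩
  exact (continuous_snd.continuousAt.rpow continuous_fst.continuousAt
    (Or.inl (ha.spectrum_pos hx).ne')).continuousWithinAt

lemma norm_rpow_le_of_mem_spectrum (ha : IsStrictlyPositive a) {t z : ℝ} (ht : t ∈ Icc 0 1)
    (hz : z ∈ spectrum ℝ a) : ‖z ^ t‖ ≤ 1 + ‖a‖ := by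
  have hz0 := (ha.spectrum_pos hz).le
  have hza : ‖z‖ ≤ ‖a‖ := by
    rcases subsingleton_or_nontrivial A with _ | _
    · simp [spectrum.of_subsingleton] at hz
    · exact spectrum.norm_le_norm_of_mem hz
  rw [Real.norm_of_nonneg hz0] at hza
  rw [Real.norm_of_nonneg (Real.rpow_nonneg hz0 t)]
  linarith [Real.rpow_le_one_add hz0 ht]

lemma ae_norm_rpow_le (ha : IsStrictlyPositive a) :
    ∀ᵐ t ∂(volume.restrict (Ioc (0 : ℝ) 1)), ∀ z ∈ spectrum ℝ a, ‖z ^ t‖ ≤ 1 + ‖a‖ :=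
  ae_restrict_of_forall_mem measurableSet_Ioc fun _ ht _ hz =>
    norm_rpow_le_of_mem_spectrum ha (Ioc_subset_Icc_self ht) hz

lemma integrableOn_rpow (ha : IsStrictlyPositive a) :
    IntegrableOn (fun t : ℝ => a ^ t) (Ioc 0 1) :=
  (integrableOn_cfc measurableSet_Ioc (fun t x : ℝ => x ^ t) (fun _ => 1 + ‖a‖) a
    (continuousOn_uncurry_rpow ha _) (ae_norm_rpow_le ha) (hasFiniteIntegral_const _)).congr_fun
    (fun _ _ => (rpow_eq_cfc_real ha.nonneg).symm) measurableSet_Ioc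

lemma cfc_setIntegral_rpow (ha : IsStrictlyPositive a) :
    cfc (fun x : ℝ => ∫ t in Ioc (0 : ℝ) 1, x ^ t) a = ∫ t in Ioc (0 : ℝ) 1, a ^ t := by
  rw [cfc_setIntegral measurableSet_Ioc (fun t x : ℝ => x ^ t) (fun _ => 1 + ‖a‖) a
    (continuousOn_uncurry_rpow ha _) (ae_norm_rpow_le ha) (hasFiniteIntegral_const _)]
  exact setIntegral_congr_fun measurableSet_Ioc fun _ _ => (rpow_eq_cfc_real ha.nonneg).symm

theorem monotoneOn_cfc_integral_rpow :
    MonotoneOn (cfc fun x : ℝ => ∫ t in (0 : ℝ)..1, x ^ t) {a : A | IsStrictlyPositive a} := by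
  intro a ha b hb hab
  simp only [intervalIntegral.integral_of_le zero_le_one, cfc_setIntegral_rpow ha,
    cfc_setIntegral_rpow hb]
  exact integral_mono_ae (integrableOn_rpow ha) (integrableOn_rpow hb) <|
    ae_restrict_of_forall_mem measurableSet_Ioc fun t ht =>
      rpow_le_rpow (Ioc_subset_Icc_self ht) hab

theorem monotoneOn_cfc_hfun : MonotoneOn (cfc hfun) {a : A | IsStrictlyPositive a} := by
  refine monotoneOn_cfc_integral_rpow.congr fun a ha => cfc_congr fun x hx => ?_
  exact (hfun_eq_integral_rpow (IsStrictlyPositive.spectrum_pos ha hx)).symm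

end CFC

open scoped Matrix.Norms.L2Operator MatrixOrder

lemma applyFun_eq_cfc {n : Type*} [Fintype n] [DecidableEq n] {M : Matrix n n ℂ}
    (hM : M.IsHermitian) (f : ℝ → ℝ) : applyFun f M = cfc f M := by
  rw [hM.cfc_eq, applyFun, dif_pos hM, IsHermitian.cfc, Unitary.conjStarAlgAut_apply]
  rfl

theorem hfun_operator_monotone
    (m : ℕ) (A B : Matrix (Fin m) (Fin m) ℂ) (hA : A.PosDef) (hB : B.PosDef)
    (hAB : (B - A).PosSemidef) :
    (applyFun hfun B - applyFun hfun A).PosSemidef := by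
  rw [applyFun_eq_cfc hA.isHermitian, applyFun_eq_cfc hB.isHermitian, ← Matrix.le_iff]
  exact CFC.monotoneOn_cfc_hfun hA.isStrictlyPositive hB.isStrictlyPositive hAB
end

section
/- Let 1 < p < ∞, n ≥ 1, let d ∈ (0,∞)^n and a, b ∈ ℝ^n, and let ‖x‖_p := (Σ_j |x_j|^p)^{1/p}. Then the function (s,t) ↦ ‖d + sa + tb‖_p² is twice continuously differentiable near (0,0) and ∂_s∂_t|_{s=t=0} ‖d + sa + tb‖_p² = 2(2−p) ‖d‖_p^{2−2p} (Σ_j d_j^{p−1} a_j)(Σ_j d_j^{p−1} b_j) + 2(p−1) ‖d‖_p^{2−p} Σ_j d_j^{p−2} a_j b_j. -/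
/-! Write `N(x) = (∑ j, x j ^ p) ^ (1 / p)` for positive `x`. By the chain rule,
`d/ds N(f s) ^ r = r N(f s) ^ (r - p) ∑ j, f s j ^ (p - 1) f' j` for every real `r`.
With `r = 2` the inner derivative is `2 N(d + s a) ^ (2 - p) ∑ j, (d j + s a j) ^ (p - 1) b j`
for all small `s`; differentiating this in `s` (with `r = 2 - p` and the product rule) gives
the formula. -/

open Filter Topology

section

variable {ι : Type*} [Fintype ι] {p : ℝ}

theorem sum_rpow_pos [Nonempty ι] {x : ι → ℝ} (hx : ∀ j, 0 < x j) : 0 < ∑ j, x j ^ p :=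
  Finset.sum_pos (fun j _ => Real.rpow_pos_of_pos (hx j) p) Finset.univ_nonempty

theorem ContDiffAt.rpow_sum_rpow [Nonempty ι] {E : Type*} [NormedAddCommGroup E]
    [NormedSpace ℝ E] {f : E → ι → ℝ} {x : E} {k : WithTop ℕ∞}
    (hf : ∀ j, ContDiffAt ℝ k (fun y => f y j) x) (hpos : ∀ j, 0 < f x j) :
    ContDiffAt ℝ k (fun y => (∑ j, f y j ^ p) ^ (1 / p)) x :=
  (ContDiffAt.sum fun j _ => (hf j).rpow_const_of_ne (hpos j).ne').rpow_const_of_ne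
    (sum_rpow_pos hpos).ne'

variable {f : ℝ → ι → ℝ} {f' : ι → ℝ} {t : ℝ}

theorem HasDerivAt.sum_rpow_mul (q : ℝ) (w : ι → ℝ)
    (hf : ∀ j, HasDerivAt (fun s => f s j) (f' j) t) (hne : ∀ j, f t j ≠ 0) :
    HasDerivAt (fun s => ∑ j, f s j ^ q * w j) (q * ∑ j, f t j ^ (q - 1) * f' j * w j) t := by
  rw [Finset.mul_sum]
  refine HasDerivAt.fun_sum fun j _ => ?_
  exact (((hf j).rpow_const (Or.inl (hne j))).mul_const (w j)).congr_deriv (by ring)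

theorem HasDerivAt.rpow_sum_rpow [Nonempty ι] (hp : p ≠ 0)
    (hf : ∀ j, HasDerivAt (fun s => f s j) (f' j) t) (hpos : ∀ j, 0 < f t j) :
    HasDerivAt (fun s => (∑ j, f s j ^ p) ^ (1 / p))
      (((∑ j, f t j ^ p) ^ (1 / p)) ^ (1 - p) * ∑ j, f t j ^ (p - 1) * f' j) t := by
  have hS := sum_rpow_pos (p := p) hpos
  have hsum := HasDerivAt.sum_rpow_mul p 1 hf fun j => (hpos j).ne'
  simp only [Pi.one_apply, mul_one] at hsum
  convert hsum.rpow_const (p := 1 / p) (Or.inl hS.ne') using 1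
  rw [← Real.rpow_mul hS.le]
  field_simp

theorem HasDerivAt.rpow_sum_rpow_rpow [Nonempty ι] (hp : p ≠ 0) (r : ℝ)
    (hf : ∀ j, HasDerivAt (fun s => f s j) (f' j) t) (hpos : ∀ j, 0 < f t j) :
    HasDerivAt (fun s => ((∑ j, f s j ^ p) ^ (1 / p)) ^ r)
      (r * ((∑ j, f t j ^ p) ^ (1 / p)) ^ (r - p) * ∑ j, f t j ^ (p - 1) * f' j) t := by
  have hN : 0 < (∑ j, f t j ^ p) ^ (1 / p) := Real.rpow_pos_of_pos (sum_rpow_pos hpos) _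
  convert (HasDerivAt.rpow_sum_rpow hp hf hpos).rpow_const (p := r) (Or.inl hN.ne') using 1
  rw [show r - p = (1 - p) + (r - 1) by ring, Real.rpow_add hN]
  ring

end

theorem mixed_second_derivative_of_p_norm_squared
    (p : ℝ) (hp : 1 < p) (n : ℕ) (hn : 1 ≤ n)
    (d a b : Fin n → ℝ) (hd : ∀ j, 0 < d j) :
    ContDiffAt ℝ 2
      (fun st : ℝ × ℝ =>
        ((∑ j, (d j + st.1 * a j + st.2 * b j) ^ p) ^ (1 / p)) ^ (2 : ℕ)) (0, 0) ∧
    deriv (fun s : ℝ => deriv (fun t : ℝ =>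
        ((∑ j, (d j + s * a j + t * b j) ^ p) ^ (1 / p)) ^ (2 : ℕ)) 0) 0
      = 2 * (2 - p) * ((∑ j, d j ^ p) ^ (1 / p)) ^ (2 - 2 * p) *
          ((∑ j, d j ^ (p - 1) * a j) * (∑ j, d j ^ (p - 1) * b j))
        + 2 * (p - 1) * ((∑ j, d j ^ p) ^ (1 / p)) ^ (2 - p) *
          ∑ j, d j ^ (p - 2) * a j * b j := by
  have hp0 : p ≠ 0 := by positivity
  have : Nonempty (Fin n) := ⟨⟨0, hn⟩⟩
  refine ⟨(ContDiffAt.rpow_sum_rpow (fun j => by fun_prop) (by simpa using hd)).pow 2, ?_⟩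
  have hline : ∀ j, HasDerivAt (fun s => d j + s * a j) (a j) 0 := fun j => by
    simpa using ((hasDerivAt_id (0 : ℝ)).mul_const (a j)).const_add (d j)
  have hpos : ∀ᶠ s in 𝓝 0, ∀ j, 0 < d j + s * a j :=
    eventually_all.2 fun j =>
      (hline j).continuousAt.eventually (eventually_gt_nhds (by simpa using hd j))
  have hinner : (fun s => deriv (fun t =>
      ((∑ j, (d j + s * a j + t * b j) ^ p) ^ (1 / p)) ^ (2 : ℕ)) 0) =ᶠ[𝓝 0]
      fun s => 2 * ((∑ j, (d j + s * a j) ^ p) ^ (1 / p)) ^ (2 - p) *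
        ∑ j, (d j + s * a j) ^ (p - 1) * b j := by
    filter_upwards [hpos] with s hs
    have hlin : ∀ j, HasDerivAt (fun t => d j + s * a j + t * b j) (b j) 0 := fun j => by
      simpa using ((hasDerivAt_id (0 : ℝ)).mul_const (b j)).const_add (d j + s * a j)
    have h := (HasDerivAt.rpow_sum_rpow_rpow hp0 2 hlin (by simpa using hs)).deriv
    simp only [Real.rpow_two, zero_mul, add_zero] at h
    exact h
  rw [hinner.deriv_eq]
  have hnorm := HasDerivAt.rpow_sum_rpow_rpow hp0 (2 - p) hline (by simpa using hd)
  have hsum := HasDerivAt.sum_rpow_mul (p - 1) b hline (by simpa using fun j => (hd j).ne')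
  rw [((hnorm.const_mul 2).fun_mul hsum).deriv]
  simp only [zero_mul, add_zero]
  rw [show p - 1 - 1 = p - 2 by ring, show 2 - p - p = 2 - 2 * p by ring]
  ring
end
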